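/- arXiv:2007.12338 — 2 statements merged into one kernel-verified Lean document; each statement's English description precedes it below -/
import Mathlib

section
/- Let ρ be a monotone risk measure defined on all Borel probability measures on ℝ, let α ∈ (0,1], let 𝛉 = (θ₁,…,θₙ) ∈ (0,∞)ⁿ, and let Λ be an n×n doubly stochastic matrix. Then ρ̄(𝐏_{α,𝛉}) ≤ ρ̄(Λ𝐏_{α,𝛉}) ≤ ρ̄(𝐏_{α,Λ𝛉}). -/
open MeasureTheory
open scoped ENNReal BigOperators

noncomputable section

/-- The `f`-aggregation set: laws of `f (X₁,…,Xₙ)` over all couplings with marginals `F`. -/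
def aggSetF (n : ℕ) (f : (Fin n → ℝ) → ℝ) (F : Fin n → Measure ℝ) : Set (Measure ℝ) :=
  {H | ∃ μ : Measure (Fin n → ℝ), IsProbabilityMeasure μ ∧
    (∀ i, μ.map (fun x => x i) = F i) ∧ H = μ.map f}

/-- The aggregation set for sums. -/
def aggSet (n : ℕ) (F : Fin n → Measure ℝ) : Set (Measure ℝ) :=
  aggSetF n (fun x => ∑ i, x i) F

/-- A symmetric function on `ℝⁿ`. -/
def IsSymmetricFn (n : ℕ) (f : (Fin n → ℝ) → ℝ) : Prop :=
  ∀ (π : Equiv.Perm (Fin n)) (x : Fin n → ℝ), f (x ∘ π) = f x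

/-- Left-continuous quantile function of a measure on ℝ. -/
def quantile (F : Measure ℝ) (p : ℝ) : ℝ :=
  sInf {x : ℝ | p ≤ (F (Set.Iic x)).toReal}

/-- The uniform probability measure on (0,1). -/
def uniform01 : Measure ℝ := volume.restrict (Set.Ioo (0 : ℝ) 1)

/-- Comonotonic sum F₁ ⊕ ⋯ ⊕ Fₙ : the law of ∑ Fᵢ⁻¹(U), U uniform on (0,1). -/
def comonoSum (n : ℕ) (F : Fin n → Measure ℝ) : Measure ℝ :=
  uniform01.map (fun u => ∑ i, quantile (F i) u)

/-- Convex order F ≺cx G. -/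
def ConvexOrder (F G : Measure ℝ) : Prop :=
  ∀ φ : ℝ → ℝ, ConvexOn ℝ Set.univ φ → Integrable φ F → Integrable φ G →
    ∫ x, φ x ∂F ≤ ∫ x, φ x ∂G

/-- Stochastic order F ≺st G, i.e. F((-∞,x]) ≥ G((-∞,x]) for all x. -/
def StOrder (F G : Measure ℝ) : Prop :=
  ∀ x : ℝ, G (Set.Iic x) ≤ F (Set.Iic x)

/-- Doubly stochastic matrix. -/
def DoublyStochastic {n : ℕ} (Λ : Matrix (Fin n) (Fin n) ℝ) : Prop :=
  (∀ i j, 0 ≤ Λ i j) ∧ (∀ i, ∑ j, Λ i j = 1) ∧ (∀ j, ∑ i, Λ i j = 1)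

/-- Distribution mixture Λ𝐅 : i-th component is ∑ⱼ Λᵢⱼ Fⱼ. -/
def distMix {n : ℕ} (Λ : Matrix (Fin n) (Fin n) ℝ) (F : Fin n → Measure ℝ) :
    Fin n → Measure ℝ :=
  fun i => ∑ j, ENNReal.ofReal (Λ i j) • F j

/-- Quantile mixture Λ⊗𝐅 : i-th component is the law of ∑ⱼ Λᵢⱼ Fⱼ⁻¹(U). -/
def quantileMix {n : ℕ} (Λ : Matrix (Fin n) (Fin n) ℝ) (F : Fin n → Measure ℝ) :
    Fin n → Measure ℝ :=
  fun i => uniform01.map (fun u => ∑ j, Λ i j * quantile (F j) u)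

/-- Worst-case value of a risk measure over the aggregation set, valued in EReal. -/
def worstCase (ρ : Measure ℝ → ℝ) (n : ℕ) (F : Fin n → Measure ℝ) : EReal :=
  sSup ((fun H => ((ρ H : ℝ) : EReal)) '' aggSet n F)

/-- Worst-case Value-at-Risk over the aggregation set, valued in EReal. -/
def worstVaR (p : ℝ) (n : ℕ) (F : Fin n → Measure ℝ) : EReal :=
  sSup ((fun G => ((quantile G p : ℝ) : EReal)) '' aggSet n F)

/-- The class M_D of distributions with a nonincreasing density on an interval support. -/
def MemMD (F : Measure ℝ) : Prop :=
  ∃ f : ℝ → ℝ, Measurable f ∧ (∀ x, 0 ≤ f x) ∧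
    F = volume.withDensity (fun x => ENNReal.ofReal (f x)) ∧
    ∃ s : Set ℝ, s.OrdConnected ∧ (∀ x, x ∉ s → f x = 0) ∧
      (∀ x ∈ s, ∀ y ∈ s, x ≤ y → f y ≤ f x)

/-- The class M_I of distributions with a nondecreasing density on an interval support. -/
def MemMI (F : Measure ℝ) : Prop :=
  ∃ f : ℝ → ℝ, Measurable f ∧ (∀ x, 0 ≤ f x) ∧
    F = volume.withDensity (fun x => ENNReal.ofReal (f x)) ∧
    ∃ s : Set ℝ, s.OrdConnected ∧ (∀ x, x ∉ s → f x = 0) ∧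
      (∀ x ∈ s, ∀ y ∈ s, x ≤ y → f x ≤ f y)

/-- Pareto(α, θ) distribution, via its Lebesgue density α θ^α x^{-(α+1)} on [θ, ∞). -/
def pareto (α θ : ℝ) : Measure ℝ :=
  volume.withDensity
    (fun x => if θ ≤ x then ENNReal.ofReal (α * θ ^ α / x ^ (α + 1)) else 0)

/-- A monotone risk measure (w.r.t. stochastic order, on probability measures). -/
def MonotoneRisk (ρ : Measure ℝ → ℝ) : Prop :=
  ∀ F G : Measure ℝ, IsProbabilityMeasure F → IsProbabilityMeasure G →
    StOrder F G → ρ F ≤ ρ G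

/-- A risk measure consistent with convex order (on finite-mean probability measures). -/
def CxConsistentRisk (ρ : Measure ℝ → ℝ) : Prop :=
  ∀ F G : Measure ℝ, IsProbabilityMeasure F → IsProbabilityMeasure G →
    Integrable id F → Integrable id G → ConvexOrder F G → ρ F ≤ ρ G

/-- Uniform distribution on [a,b]. -/
def unifOn (a b : ℝ) : Measure ℝ :=
  (ENNReal.ofReal (b - a))⁻¹ • volume.restrict (Set.Icc a b)

/-- Bernoulli distribution with parameter p, as a measure on ℝ. -/
def bern (p : ℝ) : Measure ℝ :=
  ENNReal.ofReal (1 - p) • Measure.dirac (0 : ℝ) + ENNReal.ofReal p • Measure.dirac (1 : ℝ)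

/-- The set C(𝐅) of finite-mean distributions dominated by the comonotonic sum in convex order. -/
def CSet (n : ℕ) (F : Fin n → Measure ℝ) : Set (Measure ℝ) :=
  {G | IsProbabilityMeasure G ∧ Integrable id G ∧ ConvexOrder G (comonoSum n F)}

/-!
Mixing only enlarges the aggregation set: by Birkhoff's theorem `Λ` is a convex combination of
permutation matrices, and mixing the permuted couplings of `𝐅` with these weights gives a coupling
of `Λ𝐅` with the same law of the sum.

For the second inequality, the mixture `∑ⱼ Λᵢⱼ P_{α,θⱼ}` has survival function
`∑ⱼ Λᵢⱼ min(1, (θⱼ/x)^α) ≤ ((∑ⱼ Λᵢⱼ θⱼ)/x)^α`, by concavity of `t ↦ t^α` for `α ≤ 1`. Hence the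
quantile transform carrying it to `P_{α,(Λθ)ᵢ}` is an increasing map `T` with `x ≤ T x`. Applying
these maps coordinatewise to a coupling of `Λ𝐏_{α,θ}` gives a coupling of `𝐏_{α,Λθ}` whose sum
is pointwise larger, hence stochastically larger.
-/

open Set Filter

lemma isProbabilityMeasure_finset_sum_smul {Ω ι : Type*} [MeasurableSpace Ω] {s : Finset ι}
    {c : ι → ℝ≥0∞} (hc : ∑ k ∈ s, c k = 1) {μ : ι → Measure Ω}
    (hμ : ∀ k ∈ s, IsProbabilityMeasure (μ k)) : IsProbabilityMeasure (∑ k ∈ s, c k • μ k) := by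
  refine ⟨?_⟩
  simp only [Measure.coe_finsetSum, Finset.sum_apply, Measure.smul_apply, smul_eq_mul]
  rw [Finset.sum_congr rfl fun k hk => by rw [(hμ k hk).measure_univ, mul_one], hc]

section Aggregation

variable {n : ℕ} {f : (Fin n → ℝ) → ℝ}

lemma isProbabilityMeasure_of_mem_aggSetF (hf : Measurable f) {F : Fin n → Measure ℝ}
    {H : Measure ℝ} (hH : H ∈ aggSetF n f F) : IsProbabilityMeasure H := by
  obtain ⟨μ, hμ, -, rfl⟩ := hH
  exact Measure.isProbabilityMeasure_map hf.aemeasurable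

lemma mem_aggSetF_sum_smul (hf : Measurable f) {κ : Type*} {s : Finset κ} {c : κ → ℝ≥0∞}
    (hc : ∑ k ∈ s, c k = 1) {G : κ → Fin n → Measure ℝ} {H : Measure ℝ}
    (hH : ∀ k ∈ s, H ∈ aggSetF n f (G k)) : H ∈ aggSetF n f (∑ k ∈ s, c k • G k) := by
  choose! μ hμ hμG hμH using hH
  refine ⟨∑ k ∈ s, c k • μ k, isProbabilityMeasure_finset_sum_smul hc hμ, fun i => ?_, ?_⟩
  · rw [Measure.map_finset_sum (measurable_pi_apply i).aemeasurable, Finset.sum_apply]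
    exact Finset.sum_congr rfl fun k hk => by rw [Measure.map_smul, hμG k hk]; rfl
  · rw [Measure.map_finset_sum hf.aemeasurable,
      Finset.sum_congr rfl fun k hk => by rw [Measure.map_smul, ← hμH k hk],
      ← Finset.sum_smul, hc, one_smul]

lemma mem_aggSetF_comp_perm (hf : Measurable f) (hsymm : IsSymmetricFn n f)
    {F : Fin n → Measure ℝ} {H : Measure ℝ} (hH : H ∈ aggSetF n f F) (σ : Equiv.Perm (Fin n)) :
    H ∈ aggSetF n f (fun i => F (σ i)) := by
  obtain ⟨μ, hμ, hμF, rfl⟩ := hH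
  have hσ : Measurable fun x : Fin n → ℝ => x ∘ σ :=
    measurable_pi_lambda _ fun i => measurable_pi_apply _
  refine ⟨μ.map (· ∘ σ), Measure.isProbabilityMeasure_map hσ.aemeasurable, fun i => ?_, ?_⟩
  · rw [Measure.map_map (measurable_pi_apply i) hσ]
    exact hμF (σ i)
  · rw [Measure.map_map hf hσ]
    exact congrArg μ.map (funext fun x => (hsymm σ x).symm)

lemma distMix_eq_sum_perm {Λ : Matrix (Fin n) (Fin n) ℝ} {w : Equiv.Perm (Fin n) → ℝ}
    (hw : ∀ σ, 0 ≤ w σ) (hΛ : ∑ σ, w σ • σ.permMatrix ℝ = Λ) (F : Fin n → Measure ℝ) :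
    distMix Λ F = ∑ σ, ENNReal.ofReal (w σ) • fun i => F (σ i) := by
  funext i
  have hΛij : ∀ j, ENNReal.ofReal (Λ i j) = ∑ σ, if σ i = j then ENNReal.ofReal (w σ) else 0 := by
    intro j
    simp only [← hΛ, Matrix.sum_apply, Matrix.smul_apply, Equiv.Perm.permMatrix,
      PEquiv.toMatrix_apply, Equiv.toPEquiv_apply, Option.mem_def, Option.some.injEq, smul_eq_mul,
      mul_ite, mul_one, mul_zero]
    rw [ENNReal.ofReal_sum_of_nonneg fun σ _ => by split_ifs <;> simp [hw]]
    exact Finset.sum_congr rfl fun σ _ => by split_ifs <;> simp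
  simp only [distMix, hΛij, Finset.sum_smul, ite_smul, zero_smul, Finset.sum_apply, Pi.smul_apply]
  rw [Finset.sum_comm]
  simp

lemma aggSetF_subset_distMix (hf : Measurable f) (hsymm : IsSymmetricFn n f)
    {Λ : Matrix (Fin n) (Fin n) ℝ} (hΛ : DoublyStochastic Λ) (F : Fin n → Measure ℝ) :
    aggSetF n f F ⊆ aggSetF n f (distMix Λ F) := by
  obtain ⟨w, hw0, hw1, hwΛ⟩ :=
    exists_eq_sum_perm_of_mem_doublyStochastic (mem_doublyStochastic_iff_sum.2 hΛ)
  intro H hH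
  rw [distMix_eq_sum_perm hw0 hwΛ]
  refine mem_aggSetF_sum_smul hf ?_ fun σ _ => mem_aggSetF_comp_perm hf hsymm hH σ
  rw [← ENNReal.ofReal_sum_of_nonneg fun σ _ => hw0 σ, hw1, ENNReal.ofReal_one]

end Aggregation

lemma measurable_sum_coord (n : ℕ) : Measurable fun x : Fin n → ℝ => ∑ i, x i :=
  Finset.measurable_sum _ fun i _ => measurable_pi_apply i

lemma isSymmetricFn_sum (n : ℕ) : IsSymmetricFn n fun x => ∑ i, x i :=
  fun σ x => Equiv.sum_comp σ x

lemma worstCase_le_worstCase {ρ : Measure ℝ → ℝ} (hρ : MonotoneRisk ρ) {n : ℕ}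
    {F G : Fin n → Measure ℝ} (h : ∀ H ∈ aggSet n F, ∃ H' ∈ aggSet n G, StOrder H H') :
    worstCase ρ n F ≤ worstCase ρ n G := by
  refine sSup_le_sSup_of_isCofinalFor ?_
  rintro _ ⟨H, hH, rfl⟩
  obtain ⟨H', hH', hHH'⟩ := h H hH
  have := isProbabilityMeasure_of_mem_aggSetF (measurable_sum_coord n) hH
  have := isProbabilityMeasure_of_mem_aggSetF (measurable_sum_coord n) hH'
  exact ⟨_, ⟨H', hH', rfl⟩, EReal.coe_le_coe_iff.2 (hρ _ _ ‹_› ‹_› hHH')⟩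

lemma exists_mem_aggSet_stOrder_of_map_ge {n : ℕ} {F G : Fin n → Measure ℝ} {T : Fin n → ℝ → ℝ}
    (hT : ∀ i, Measurable (T i)) (hle : ∀ i x, x ≤ T i x) (hmap : ∀ i, (F i).map (T i) = G i)
    {H : Measure ℝ} (hH : H ∈ aggSet n F) : ∃ H' ∈ aggSet n G, StOrder H H' := by
  obtain ⟨μ, hμ, hμF, rfl⟩ := hH
  set Tn : (Fin n → ℝ) → Fin n → ℝ := fun x i => T i (x i)
  have hTn : Measurable Tn := measurable_pi_lambda _ fun i => (hT i).comp (measurable_pi_apply i)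
  have hsum := measurable_sum_coord n
  refine ⟨(μ.map Tn).map fun x => ∑ i, x i,
    ⟨μ.map Tn, Measure.isProbabilityMeasure_map hTn.aemeasurable, fun i => ?_, rfl⟩, fun t => ?_⟩
  · rw [Measure.map_map (measurable_pi_apply i) hTn,
      show (fun x => x i) ∘ Tn = T i ∘ fun x => x i from rfl,
      ← Measure.map_map (hT i) (measurable_pi_apply i), hμF i, hmap i]
  · rw [Measure.map_map hsum hTn, Measure.map_apply (hsum.comp hTn) measurableSet_Iic,
      Measure.map_apply hsum measurableSet_Iic]
    exact measure_mono fun x (hx : ∑ i, T i (x i) ≤ t) =>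
      (Finset.sum_le_sum fun i _ => hle i (x i)).trans hx

lemma MeasureTheory.Measure.map_eq_of_measure_Iic_eq {μ ν : Measure ℝ} [IsFiniteMeasure μ]
    [IsFiniteMeasure ν] {T : ℝ → ℝ} (hT : StrictMono T) (hT' : Function.Surjective T)
    (h : ∀ x, μ (Iic x) = ν (Iic (T x))) : μ.map T = ν := by
  refine Measure.ext_of_Iic _ _ fun y => ?_
  obtain ⟨x, rfl⟩ := hT' y
  rw [Measure.map_apply hT.monotone.measurable measurableSet_Iic, ← h]
  congr 1
  ext z
  exact hT.le_iff_le

lemma Monotone.of_strictMonoOn_Ici {g : ℝ → ℝ} {a : ℝ} (hg : StrictMonoOn g (Ici a))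
    (hconst : ∀ x ≤ a, g x = g a) : Monotone g := by
  intro x y hxy
  rcases le_total y a with hya | hay
  · rw [hconst x (hxy.trans hya), hconst y hya]
  rcases le_total x a with hxa | hax
  · exact (hconst x hxa).symm ▸ hg.monotoneOn self_mem_Ici hay hay
  · exact hg.monotoneOn hax hay hxy

lemma strictMono_add_min_sub {g : ℝ → ℝ} {a : ℝ} (hg : Monotone g)
    (hg' : StrictMonoOn g (Ici a)) : StrictMono fun x => g x + min (x - a) 0 := by
  intro x y hxy
  rcases lt_or_ge x a with hxa | hax
  · refine add_lt_add_of_le_of_lt (hg hxy.le) (lt_min ?_ ?_) <;> linarith [min_le_left (x - a) 0]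
  · exact add_lt_add_of_lt_of_le (hg' hax (hax.trans hxy.le) hxy) (min_le_min (by linarith) le_rfl)

lemma surjective_add_min_sub {g : ℝ → ℝ} {a : ℝ} (hg : Continuous g) (hg' : Monotone g)
    (hle : ∀ x, x ≤ g x + min (x - a) 0) : Function.Surjective fun x => g x + min (x - a) 0 := by
  refine Continuous.surjective (by fun_prop) (tendsto_atTop_mono hle tendsto_id) ?_
  refine tendsto_atBot_mono' _ ?_ (tendsto_atBot_add_const_right _ (g a - a) tendsto_id)
  filter_upwards [eventually_le_atBot a] with x hx
  linarith [hg' hx, min_le_left (x - a) 0, show id x = x from rfl]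

lemma StrictAntiOn.const_div_rpow {S : ℝ → ℝ} {t : Set ℝ} (hS : StrictAntiOn S t)
    (hS0 : ∀ x ∈ t, 0 < S x) {c p : ℝ} (hc : 0 < c) (hp : 0 < p) :
    StrictMonoOn (fun x => c / S x ^ p) t := fun _ hx y hy hxy =>
  div_lt_div_of_pos_left hc (Real.rpow_pos_of_pos (hS0 y hy) p)
    (Real.rpow_lt_rpow (hS0 y hy).le (hS hx hy hxy) hp)

lemma exists_map_eq_of_strictMonoOn_Ici {μ ν : Measure ℝ} [IsFiniteMeasure μ]
    [IsFiniteMeasure ν] {g : ℝ → ℝ} {a : ℝ} (hg : Continuous g) (hg_strict : StrictMonoOn g (Ici a))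
    (hconst : ∀ x ≤ a, g x = g a) (hle : ∀ x, a ≤ x → x ≤ g x)
    (hcdf : ∀ x, a ≤ x → μ (Iic x) = ν (Iic (g x))) (hν : ν (Iic (g a)) = 0) :
    ∃ T : ℝ → ℝ, Measurable T ∧ (∀ x, x ≤ T x) ∧ μ.map T = ν := by
  have hg_mono := Monotone.of_strictMonoOn_Ici hg_strict hconst
  -- below `a` the map is a translation, so that it stays strictly increasing
  have hbelow : ∀ x ≤ a, g x + min (x - a) 0 = g a + (x - a) := fun x hx => by
    rw [hconst x hx, min_eq_left (sub_nonpos.2 hx)]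
  have hle' : ∀ x, x ≤ g x + min (x - a) 0 := fun x => by
    rcases le_total x a with hx | hx
    · linarith [hbelow x hx, hle a le_rfl]
    · rw [min_eq_right (sub_nonneg.2 hx), add_zero]
      exact hle x hx
  have hT := strictMono_add_min_sub hg_mono hg_strict
  refine ⟨_, hT.monotone.measurable, hle', Measure.map_eq_of_measure_Iic_eq hT
    (surjective_add_min_sub hg hg_mono hle') fun x => ?_⟩
  rcases le_total x a with hx | hx
  · rw [measure_mono_null (Iic_subset_Iic.2 hx) ((hcdf a le_rfl).trans hν),
      measure_mono_null (Iic_subset_Iic.2 (by linarith [hbelow x hx])) hν]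
  · rw [min_eq_right (sub_nonneg.2 hx), add_zero, hcdf x hx]

section Pareto

variable {α θ : ℝ}

-- `min 1 ((θ / x) ^ α)`, written with `max θ x` so that it is also correct for `x ≤ 0`
def paretoSurvival (α θ x : ℝ) : ℝ := (θ / max θ x) ^ α

lemma paretoSurvival_of_le {x : ℝ} (hθ : 0 < θ) (hx : x ≤ θ) : paretoSurvival α θ x = 1 := by
  rw [paretoSurvival, max_eq_left hx, div_self hθ.ne', Real.one_rpow]

lemma paretoSurvival_pos (hθ : 0 < θ) (x : ℝ) : 0 < paretoSurvival α θ x :=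
  Real.rpow_pos_of_pos (div_pos hθ (hθ.trans_le (le_max_left θ x))) α

lemma paretoSurvival_le_one (hα : 0 ≤ α) (hθ : 0 < θ) (x : ℝ) : paretoSurvival α θ x ≤ 1 :=
  Real.rpow_le_one (div_nonneg hθ.le (hθ.le.trans (le_max_left θ x)))
    (div_le_one_of_le₀ (le_max_left θ x) (hθ.le.trans (le_max_left θ x))) hα

lemma paretoSurvival_le_div_rpow (hα : 0 ≤ α) (hθ : 0 < θ) {x : ℝ} (hx : 0 < x) :
    paretoSurvival α θ x ≤ (θ / x) ^ α :=
  Real.rpow_le_rpow (div_nonneg hθ.le (hθ.le.trans (le_max_left θ x)))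
    (div_le_div_of_nonneg_left hθ.le hx (le_max_right θ x)) hα

lemma paretoSurvival_antitone (hα : 0 ≤ α) (hθ : 0 < θ) : Antitone (paretoSurvival α θ) :=
  fun x y hxy => Real.rpow_le_rpow (div_nonneg hθ.le (hθ.le.trans (le_max_left θ y)))
    (div_le_div_of_nonneg_left hθ.le (hθ.trans_le (le_max_left θ x)) (max_le_max le_rfl hxy)) hα

lemma paretoSurvival_strictAntiOn (hα : 0 < α) (hθ : 0 < θ) :
    StrictAntiOn (paretoSurvival α θ) (Ici θ) := by
  intro x (hx : θ ≤ x) y (hy : θ ≤ y) hxy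
  rw [paretoSurvival, paretoSurvival, max_eq_right hx, max_eq_right hy]
  exact Real.rpow_lt_rpow (div_nonneg hθ.le (hθ.trans_le hy).le)
    (div_lt_div_of_pos_left hθ (hθ.trans_le hx) hxy) hα

lemma continuous_paretoSurvival (hθ : 0 < θ) : Continuous (paretoSurvival α θ) :=
  (continuous_const.div (continuous_const.max continuous_id)
    fun x => (hθ.trans_le (le_max_left θ x)).ne').rpow_const
      fun x => Or.inl (div_pos hθ (hθ.trans_le (le_max_left θ x))).ne'

lemma pareto_Iic_of_lt {x : ℝ} (hx : x < θ) : pareto α θ (Iic x) = 0 := by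
  rw [pareto, withDensity_apply _ measurableSet_Iic]
  refine (setLIntegral_congr_fun measurableSet_Iic fun t (ht : t ≤ x) => ?_).trans lintegral_zero
  exact if_neg (by linarith)

lemma pareto_Iic_of_le (hα : 0 < α) (hθ : 0 < θ) {x : ℝ} (hx : θ ≤ x) :
    pareto α θ (Iic x) = ENNReal.ofReal (1 - (θ / x) ^ α) := by
  have hpos : ∀ t ∈ uIcc θ x, 0 < t := fun t ht => hθ.trans_le (uIcc_of_le hx ▸ ht).1
  have hcont : ContinuousOn (fun t => α * θ ^ α * t ^ (-(α + 1))) (uIcc θ x) :=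
    continuousOn_const.mul fun t ht =>
      (Real.continuousAt_rpow_const t _ (Or.inl (hpos t ht).ne')).continuousWithinAt
  have hint : ∫ t in θ..x, α * θ ^ α * t ^ (-(α + 1)) = 1 - (θ / x) ^ α := by
    rw [intervalIntegral.integral_const_mul, integral_rpow (Or.inr ⟨by
      intro h; linarith, fun h0 => (hpos 0 h0).false⟩), show -(α + 1) + 1 = -α by ring,
      Real.div_rpow hθ.le (hθ.le.trans hx), Real.rpow_neg (hθ.le.trans hx),
      Real.rpow_neg hθ.le]
    field_simp
    ring
  have hdens : ∀ t, (if θ ≤ t then ENNReal.ofReal (α * θ ^ α / t ^ (α + 1)) else 0) =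
      (Ici θ).indicator (fun t => ENNReal.ofReal (α * θ ^ α * t ^ (-(α + 1)))) t := by
    intro t
    by_cases ht : θ ≤ t
    · rw [indicator_of_mem (mem_Ici.2 ht), if_pos ht, Real.rpow_neg (hθ.le.trans ht),
        div_eq_mul_inv]
    · rw [indicator_of_notMem (mt mem_Ici.1 ht), if_neg ht]
  simp only [pareto, withDensity_apply _ measurableSet_Iic, hdens]
  rw [lintegral_indicator measurableSet_Ici, Measure.restrict_restrict measurableSet_Ici,
    Ici_inter_Iic, ← ofReal_integral_eq_lintegral_ofReal
      ((uIcc_of_le hx ▸ hcont).integrableOn_Icc) (ae_restrict_of_forall_mem measurableSet_Icc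
        fun t ht => by have := hpos t (uIcc_of_le hx ▸ ht); positivity),
    integral_Icc_eq_integral_Ioc, ← intervalIntegral.integral_of_le hx, hint]


lemma pareto_Iic (hα : 0 < α) (hθ : 0 < θ) (x : ℝ) :
    pareto α θ (Iic x) = ENNReal.ofReal (1 - paretoSurvival α θ x) := by
  rcases lt_or_ge x θ with hx | hx
  · rw [pareto_Iic_of_lt hx, paretoSurvival_of_le hθ hx.le, sub_self, ENNReal.ofReal_zero]
  · rw [paretoSurvival, max_eq_right hx, pareto_Iic_of_le hα hθ hx]

lemma isProbabilityMeasure_pareto (hα : 0 < α) (hθ : 0 < θ) :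
    IsProbabilityMeasure (pareto α θ) := by
  refine ⟨tendsto_nhds_unique (tendsto_measure_Iic_atTop _) ?_⟩
  simp_rw [pareto_Iic hα hθ]
  have h0 : Tendsto (fun x => θ / max θ x) atTop (nhds 0) :=
    tendsto_const_nhds.div_atTop (tendsto_atTop_mono (le_max_right θ) tendsto_id)
  have h : Tendsto (paretoSurvival α θ) atTop (nhds 0) := by
    have := h0.rpow_const (Or.inr hα.le)
    rwa [Real.zero_rpow hα.ne'] at this
  simpa using ENNReal.tendsto_ofReal (h.const_sub 1)

lemma pareto_Iic_div_rpow_inv (hα : 0 < α) (hθ : 0 < θ) {u : ℝ} (hu0 : 0 < u) (hu1 : u ≤ 1) :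
    pareto α θ (Iic (θ / u ^ α⁻¹)) = ENNReal.ofReal (1 - u) := by
  have hu : 0 < u ^ α⁻¹ := Real.rpow_pos_of_pos hu0 _
  have hu' : u ^ α⁻¹ ≤ 1 := Real.rpow_le_one hu0.le hu1 (inv_nonneg.2 hα.le)
  rw [pareto_Iic hα hθ, paretoSurvival, max_eq_right (le_div_self hθ.le hu hu'),
    div_div_cancel₀ hθ.ne', Real.rpow_inv_rpow hu0.le hα.ne']

end Pareto
section ParetoMixture

variable {ι : Type*} {s : Finset ι} {w θ : ι → ℝ} {α : ℝ}

def paretoMixSurvival (s : Finset ι) (w θ : ι → ℝ) (α x : ℝ) : ℝ :=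
  ∑ j ∈ s, w j * paretoSurvival α (θ j) x

lemma sum_smul_pareto_Iic (hα : 0 < α) (hθ : ∀ j ∈ s, 0 < θ j) (hw : ∀ j ∈ s, 0 ≤ w j)
    (hw1 : ∑ j ∈ s, w j = 1) (x : ℝ) :
    (∑ j ∈ s, ENNReal.ofReal (w j) • pareto α (θ j)) (Iic x) =
      ENNReal.ofReal (1 - paretoMixSurvival s w θ α x) := by
  simp only [Measure.coe_finsetSum, Finset.sum_apply, Measure.smul_apply, smul_eq_mul]
  rw [Finset.sum_congr rfl fun j hj => by
      rw [pareto_Iic hα (hθ j hj), ← ENNReal.ofReal_mul (hw j hj)],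
    ← ENNReal.ofReal_sum_of_nonneg fun j hj =>
      mul_nonneg (hw j hj) (sub_nonneg.2 (paretoSurvival_le_one hα.le (hθ j hj) x))]
  simp only [paretoMixSurvival, mul_sub, mul_one, Finset.sum_sub_distrib, hw1]

lemma paretoMixSurvival_pos (hθ : ∀ j ∈ s, 0 < θ j) (hw : ∀ j ∈ s, 0 < w j) (hs : s.Nonempty)
    (x : ℝ) : 0 < paretoMixSurvival s w θ α x :=
  Finset.sum_pos (fun j hj => mul_pos (hw j hj) (paretoSurvival_pos (hθ j hj) x)) hs

lemma paretoMixSurvival_le_one (hα : 0 ≤ α) (hθ : ∀ j ∈ s, 0 < θ j) (hw : ∀ j ∈ s, 0 ≤ w j)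
    (hw1 : ∑ j ∈ s, w j = 1) (x : ℝ) : paretoMixSurvival s w θ α x ≤ 1 :=
  (Finset.sum_le_sum fun j hj => mul_le_of_le_one_right (hw j hj)
    (paretoSurvival_le_one hα (hθ j hj) x)).trans hw1.le

lemma paretoMixSurvival_of_le (hθ : ∀ j ∈ s, 0 < θ j) (hw1 : ∑ j ∈ s, w j = 1) {x : ℝ}
    (hx : ∀ j ∈ s, x ≤ θ j) : paretoMixSurvival s w θ α x = 1 := by
  rw [paretoMixSurvival, Finset.sum_congr rfl fun j hj => by
    rw [paretoSurvival_of_le (hθ j hj) (hx j hj), mul_one], hw1]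

lemma paretoMixSurvival_strictAntiOn (hα : 0 < α) (hθ : ∀ j ∈ s, 0 < θ j)
    (hw : ∀ j ∈ s, 0 ≤ w j) {j₀ : ι} (hj₀ : j₀ ∈ s) (hwj₀ : 0 < w j₀) :
    StrictAntiOn (paretoMixSurvival s w θ α) (Ici (θ j₀)) := fun _ hx _ hy hxy =>
  Finset.sum_lt_sum (fun j hj => mul_le_mul_of_nonneg_left
      (paretoSurvival_antitone hα.le (hθ j hj) hxy.le) (hw j hj))
    ⟨j₀, hj₀, mul_lt_mul_of_pos_left
      (paretoSurvival_strictAntiOn hα (hθ j₀ hj₀) hx hy hxy) hwj₀⟩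

lemma continuous_paretoMixSurvival (hθ : ∀ j ∈ s, 0 < θ j) :
    Continuous (paretoMixSurvival s w θ α) :=
  continuous_finsetSum _ fun j hj => continuous_const.mul (continuous_paretoSurvival (hθ j hj))

lemma paretoMixSurvival_le_div_rpow (hα : α ∈ Icc 0 1) (hθ : ∀ j ∈ s, 0 < θ j)
    (hw : ∀ j ∈ s, 0 ≤ w j) (hw1 : ∑ j ∈ s, w j = 1) {x : ℝ} (hx : 0 < x) :
    paretoMixSurvival s w θ α x ≤ ((∑ j ∈ s, w j * θ j) / x) ^ α :=
  calc paretoMixSurvival s w θ α x ≤ ∑ j ∈ s, w j • (θ j / x) ^ α :=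
        Finset.sum_le_sum fun j hj =>
          mul_le_mul_of_nonneg_left (paretoSurvival_le_div_rpow hα.1 (hθ j hj) hx) (hw j hj)
    _ ≤ (∑ j ∈ s, w j • (θ j / x)) ^ α :=
        (Real.concaveOn_rpow hα.1 hα.2).le_map_sum hw hw1 fun j hj =>
          mem_Ici.2 (div_nonneg (hθ j hj).le hx.le)
    _ = ((∑ j ∈ s, w j * θ j) / x) ^ α := by
        simp only [smul_eq_mul, Finset.sum_div, mul_div_assoc]

lemma le_div_paretoMixSurvival_rpow_inv (hα : α ∈ Ioc 0 1) (hθ : ∀ j ∈ s, 0 < θ j)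
    (hw : ∀ j ∈ s, 0 < w j) (hw1 : ∑ j ∈ s, w j = 1) {x : ℝ} (hx : 0 < x) :
    x ≤ (∑ j ∈ s, w j * θ j) / paretoMixSurvival s w θ α x ^ α⁻¹ := by
  have hs : s.Nonempty := Finset.nonempty_of_sum_ne_zero (hw1 ▸ one_ne_zero)
  have hS := paretoMixSurvival_pos (α := α) hθ hw hs x
  have hθb : 0 < ∑ j ∈ s, w j * θ j :=
    Finset.sum_pos (fun j hj => mul_pos (hw j hj) (hθ j hj)) hs
  rw [le_div_iff₀ (Real.rpow_pos_of_pos hS _), ← le_div_iff₀' hx,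
    Real.rpow_inv_le_iff_of_pos hS.le (div_pos hθb hx).le hα.1]
  exact paretoMixSurvival_le_div_rpow (Ioc_subset_Icc_self hα) hθ (fun j hj => (hw j hj).le)
    hw1 hx

lemma exists_map_sum_smul_pareto_eq (hα : α ∈ Ioc 0 1) (hθ : ∀ j ∈ s, 0 < θ j)
    (hw : ∀ j ∈ s, 0 < w j) (hw1 : ∑ j ∈ s, w j = 1) :
    ∃ T : ℝ → ℝ, Measurable T ∧ (∀ x, x ≤ T x) ∧
      (∑ j ∈ s, ENNReal.ofReal (w j) • pareto α (θ j)).map T =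
        pareto α (∑ j ∈ s, w j * θ j) := by
  have hα0 := hα.1
  have hw0 : ∀ j ∈ s, 0 ≤ w j := fun j hj => (hw j hj).le
  have hs : s.Nonempty := Finset.nonempty_of_sum_ne_zero (hw1 ▸ one_ne_zero)
  obtain ⟨j₀, hj₀, hmin⟩ := s.exists_min_image θ hs
  set θb := ∑ j ∈ s, w j * θ j
  set S := paretoMixSurvival s w θ α
  have hθb : 0 < θb := Finset.sum_pos (fun j hj => mul_pos (hw j hj) (hθ j hj)) hs
  have hS_pos := paretoMixSurvival_pos (α := α) hθ hw hs
  have hS_one : ∀ x ≤ θ j₀, S x = 1 := fun x hx =>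
    paretoMixSurvival_of_le hθ hw1 fun j hj => hx.trans (hmin j hj)
  have := isProbabilityMeasure_pareto hα0 hθb
  have := isProbabilityMeasure_finset_sum_smul
    (by rw [← ENNReal.ofReal_sum_of_nonneg hw0, hw1, ENNReal.ofReal_one])
    fun j hj => isProbabilityMeasure_pareto hα0 (hθ j hj)
  -- the quantile function of `pareto α θb` composed with the distribution function of the mixture
  refine exists_map_eq_of_strictMonoOn_Ici (g := fun x => θb / S x ^ α⁻¹) (a := θ j₀)
    (continuous_const.div ((continuous_paretoMixSurvival hθ).rpow_const
      fun x => Or.inl (hS_pos x).ne') fun x => (Real.rpow_pos_of_pos (hS_pos x) _).ne')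
    ((paretoMixSurvival_strictAntiOn hα0 hθ hw0 hj₀ (hw j₀ hj₀)).const_div_rpow
      (fun x _ => hS_pos x) hθb (inv_pos.2 hα0))
    (fun x hx => by simp only [hS_one x hx, hS_one _ le_rfl])
    (fun x hx => le_div_paretoMixSurvival_rpow_inv hα hθ hw hw1 ((hθ j₀ hj₀).trans_le hx))
    (fun x _ => ?_) ?_
  · rw [sum_smul_pareto_Iic hα0 hθ hw0 hw1,
      pareto_Iic_div_rpow_inv hα0 hθb (hS_pos x) (paretoMixSurvival_le_one hα0.le hθ hw0 hw1 x)]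
  · simp only [hS_one _ le_rfl, Real.one_rpow, div_one]
    rw [pareto_Iic hα0 hθb, paretoSurvival_of_le hθb le_rfl, sub_self, ENNReal.ofReal_zero]

end ParetoMixture

lemma exists_map_sum_smul_pareto_eq_of_nonneg {ι : Type*} [Fintype ι] {w θ : ι → ℝ} {α : ℝ}
    (hα : α ∈ Ioc 0 1) (hθ : ∀ j, 0 < θ j) (hw : ∀ j, 0 ≤ w j) (hw1 : ∑ j, w j = 1) :
    ∃ T : ℝ → ℝ, Measurable T ∧ (∀ x, x ≤ T x) ∧
      (∑ j, ENNReal.ofReal (w j) • pareto α (θ j)).map T = pareto α (∑ j, w j * θ j) := by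
  classical
  have hsupp : ∀ j, w j ≠ 0 → 0 < w j := fun j hj => (hw j).lt_of_ne' hj
  rw [← Finset.sum_filter_of_ne fun j _ h => hsupp j (left_ne_zero_of_mul h),
    ← Finset.sum_filter_of_ne fun j _ h => hsupp j fun hj => h (by simp [hj])]
  exact exists_map_sum_smul_pareto_eq hα (fun j _ => hθ j) (fun j hj => (Finset.mem_filter.1 hj).2)
    ((Finset.sum_filter_of_ne fun j _ => hsupp j).trans hw1)

/-- Theorem 5.1: for infinite-mean Pareto risks,
    ρ̄(𝐏_{α,θ}) ≤ ρ̄(Λ𝐏_{α,θ}) ≤ ρ̄(𝐏_{α,Λθ}). -/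
theorem stmt15 (n : ℕ) (ρ : Measure ℝ → ℝ) (hρ : MonotoneRisk ρ)
    (α : ℝ) (hα : α ∈ Set.Ioc (0 : ℝ) 1)
    (θ : Fin n → ℝ) (hθ : ∀ i, 0 < θ i)
    (Λ : Matrix (Fin n) (Fin n) ℝ) (hΛ : DoublyStochastic Λ) :
    worstCase ρ n (fun i => pareto α (θ i)) ≤
        worstCase ρ n (distMix Λ (fun i => pareto α (θ i))) ∧
      worstCase ρ n (distMix Λ (fun i => pareto α (θ i))) ≤
        worstCase ρ n (fun i => pareto α (∑ j, Λ i j * θ j)) := by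
  refine ⟨sSup_le_sSup (image_mono (aggSetF_subset_distMix (measurable_sum_coord n)
    (isSymmetricFn_sum n) hΛ _)), worstCase_le_worstCase hρ fun H hH => ?_⟩
  choose T hT hle hmap using fun i =>
    exists_map_sum_smul_pareto_eq_of_nonneg hα hθ (hΛ.1 i) (hΛ.2.1 i)
  exact exists_mem_aggSet_stOrder_of_map_ge hT hle hmap hH

end
end

section
/- Let p₁,…,pₙ ∈ [0,1]. There exist random variables X₁,…,Xₙ on a common probability space with Xᵢ distributed Bernoulli(pᵢ) for each i and X₁+⋯+Xₙ almost surely equal to a constant, if and only if ∑ᵢ₌₁ⁿ pᵢ is an integer. (Equivalently, the tuple (B_{p₁},…,B_{pₙ}) is jointly mixable if and only if ∑ᵢpᵢ ∈ ℤ.) -/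
open MeasureTheory
open scoped ENNReal BigOperators

noncomputable section

/-!
If the sum of a coupling of `B_{p₁},…,B_{pₙ}` is a.s. equal to `c`, then, the coordinates being
a.s. `0` or `1`, `c` is an integer, and taking expectations gives `c = ∑ pᵢ`.
Conversely, if `∑ pᵢ = k ∈ ℤ`, lay the intervals `[sᵢ, sᵢ + pᵢ)`, `sᵢ = p₁ + ⋯ + pᵢ₋₁`, end to end
and let `Xᵢ` be the number of points of `U + ℤ` in the `i`-th one, `U` uniform on `(0,1)`. As
`pᵢ ≤ 1`, `Xᵢ ~ B_{pᵢ}`, and the `Xᵢ` together count the points of `U + ℤ` in `[0, k)`, i.e. `k`.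
-/

open Set

theorem Fin.sum_succ_sub_castSucc {M : Type*} [AddCommGroup M] :
    ∀ {n : ℕ} (f : Fin (n + 1) → M), ∑ i : Fin n, (f i.succ - f i.castSucc) = f (last n) - f 0
  | 0, f => by simp
  | n + 1, f => by
    rw [Fin.sum_univ_castSucc]
    simp_rw [Fin.succ_castSucc]
    rw [Fin.sum_succ_sub_castSucc fun i => f i.castSucc]
    simp

theorem Fin.partialSum_last {M : Type*} [AddCommGroup M] {n : ℕ} (f : Fin n → M) :
    partialSum f (last n) = ∑ i, f i := by
  simpa [partialSum_succ] using (sum_succ_sub_castSucc (partialSum f)).symm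

lemma ae_eq_zero_or_eq_one_bern (q : ℝ) : ∀ᵐ x ∂bern q, x = 0 ∨ x = 1 := by
  simp only [bern, ae_add_measure_iff]
  exact ⟨Measure.ae_smul_measure (by simp) _, Measure.ae_smul_measure (by simp) _⟩

lemma integrable_id_bern (q : ℝ) : Integrable id (bern q) :=
  ((integrable_dirac (by simp)).smul_measure ENNReal.ofReal_ne_top).add_measure
    ((integrable_dirac (by simp)).smul_measure ENNReal.ofReal_ne_top)

lemma integral_id_bern {q : ℝ} (hq : q ∈ Icc (0 : ℝ) 1) : ∫ x, x ∂bern q = q := by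
  have hint : ∀ a : ℝ, Integrable (fun x => x) (Measure.dirac a) :=
    fun a => integrable_dirac (by simp)
  rw [bern, integral_add_measure ((hint 0).smul_measure ENNReal.ofReal_ne_top)
    ((hint 1).smul_measure ENNReal.ofReal_ne_top)]
  simp [hq.1, hq.2]

lemma eq_bern_integral_of_ae_eq_zero_or_eq_one {ν : Measure ℝ} [IsProbabilityMeasure ν]
    (hν : ∀ᵐ x ∂ν, x = 0 ∨ x = 1) : ν = bern (∫ x, x ∂ν) := by
  have hsplit : ν = ν {0} • Measure.dirac 0 + ν {1} • Measure.dirac 1 := by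
    rw [← Measure.restrict_singleton, ← Measure.restrict_singleton,
      ← Measure.restrict_union (by simp) (measurableSet_singleton 1),
      Measure.restrict_eq_self_of_ae_mem (by simpa [or_comm] using hν)]
  have hsum : ν {0} + ν {1} = 1 := by simpa using congrArg (· univ) hsplit.symm
  have h1 : ν {1} = ENNReal.ofReal (ν.real {1}) := (ofReal_measureReal).symm
  have h0 : ν {0} = ENNReal.ofReal (1 - ν.real {1}) := by
    rw [ENNReal.ofReal_sub _ measureReal_nonneg, ENNReal.ofReal_one, ← h1,
      ← hsum, ENNReal.add_sub_cancel_right (measure_ne_top ν _)]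
  have hbern : ν = bern (ν.real {1}) := by
    conv_lhs => rw [hsplit, h0, h1]
    rfl
  rw [hbern, integral_id_bern ⟨measureReal_nonneg, measureReal_le_one⟩]

section Aggregation

variable {n : ℕ} {F : Fin n → Measure ℝ}

lemma mem_of_dirac_mem_aggSet (S : AddSubmonoid ℝ) (hF : ∀ i, ∀ᵐ x ∂F i, x ∈ S) {c : ℝ}
    (hc : Measure.dirac c ∈ aggSet n F) : c ∈ S := by
  obtain ⟨μ, hμ, hmarg, hlaw⟩ := hc
  have hcoord : ∀ᵐ x ∂μ, ∀ i, x i ∈ S := ae_all_iff.2 fun i =>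
    ae_of_ae_map (measurable_pi_apply i).aemeasurable ((hmarg i).symm ▸ hF i)
  have hconst : ∀ᵐ x ∂μ, ∑ i, x i = c := by
    have : ∀ᵐ y ∂μ.map (fun x : Fin n → ℝ => ∑ i, x i), y = c := by rw [← hlaw]; simp
    exact ae_of_ae_map (by fun_prop) this
  obtain ⟨x, hx, rfl⟩ := (hcoord.and hconst).exists
  exact sum_mem fun i _ => hx i

lemma integral_id_of_mem_aggSet (hF : ∀ i, Integrable id (F i)) {H : Measure ℝ}
    (hH : H ∈ aggSet n F) : ∫ x, x ∂H = ∑ i, ∫ x, x ∂F i := by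
  obtain ⟨μ, -, hmarg, rfl⟩ := hH
  have hmeas i : AEMeasurable (fun x : Fin n → ℝ => x i) μ :=
    (measurable_pi_apply i).aemeasurable
  have hint i : Integrable (fun x : Fin n → ℝ => x i) μ :=
    (integrable_map_measure (g := id) (by fun_prop) (hmeas i)).1 ((hmarg i).symm ▸ hF i)
  rw [integral_map (by fun_prop) (by fun_prop), integral_finsetSum _ fun i _ => hint i]
  refine Finset.sum_congr rfl fun i _ => ?_
  rw [← hmarg i, integral_map (hmeas i) (by fun_prop)]

end Aggregation

instance isProbabilityMeasure_uniform01 : IsProbabilityMeasure uniform01 := ⟨by simp [uniform01]⟩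

lemma ceil_sub_ae_eq_uniform01 (a : ℝ) :
    (fun u => (⌈a - u⌉ : ℝ)) =ᵐ[uniform01] fun u => ⌊a⌋ + (Iio (Int.fract a)).indicator 1 u := by
  filter_upwards [ae_restrict_mem measurableSet_Ioo] with u ⟨hu0, hu1⟩
  have hfloor := Int.floor_le a
  have hfloor' := Int.lt_floor_add_one a
  by_cases h : u ∈ Iio (Int.fract a)
  · rw [indicator_of_mem h, Pi.one_apply, ← Int.cast_one, ← Int.cast_add, Int.cast_inj,
      Int.ceil_eq_iff]
    rw [mem_Iio, Int.fract] at h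
    constructor <;> push_cast <;> linarith
  · rw [indicator_of_notMem h, add_zero, Int.cast_inj, Int.ceil_eq_iff]
    rw [mem_Iio, not_lt, Int.fract] at h
    constructor <;> linarith

lemma integrable_ceil_sub_uniform01 (a : ℝ) : Integrable (fun u => (⌈a - u⌉ : ℝ)) uniform01 :=
  ((integrable_const _).add ((integrable_const 1).indicator measurableSet_Iio)).congr
    (ceil_sub_ae_eq_uniform01 a).symm

lemma integral_ceil_sub_uniform01 (a : ℝ) : ∫ u, (⌈a - u⌉ : ℝ) ∂uniform01 = a := by
  rw [integral_congr_ae (ceil_sub_ae_eq_uniform01 a), integral_add (integrable_const _)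
    ((integrable_const 1).indicator measurableSet_Iio), integral_const,
    integral_indicator_one measurableSet_Iio, probReal_univ, one_smul, uniform01,
    measureReal_restrict_apply measurableSet_Iio, Iio_inter_Ioo,
    min_eq_left (Int.fract_lt_one a).le, Real.volume_real_Ioo_of_le (Int.fract_nonneg a),
    sub_zero, Int.fract, add_sub_cancel]

lemma ceil_sub_sub_ceil_sub_eq_zero_or_eq_one {a b : ℝ} (hab : a ≤ b) (hba : b ≤ a + 1) (u : ℝ) :
    ⌈b - u⌉ - ⌈a - u⌉ = 0 ∨ ⌈b - u⌉ - ⌈a - u⌉ = 1 := by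
  have h₁ : ⌈a - u⌉ ≤ ⌈b - u⌉ := Int.ceil_mono (by linarith)
  have h₂ : ⌈b - u⌉ ≤ ⌈a - u⌉ + 1 := by
    rw [← Int.ceil_add_one]
    exact Int.ceil_mono (by linarith)
  omega

lemma uniform01_map_ceil_sub_sub_ceil_sub {a b : ℝ} (hab : a ≤ b) (hba : b ≤ a + 1) :
    uniform01.map (fun u => ((⌈b - u⌉ - ⌈a - u⌉ : ℤ) : ℝ)) = bern (b - a) := by
  have hmeas : Measurable fun u => ((⌈b - u⌉ - ⌈a - u⌉ : ℤ) : ℝ) := by fun_prop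
  have hval : ∀ᵐ x ∂uniform01.map (fun u => ((⌈b - u⌉ - ⌈a - u⌉ : ℤ) : ℝ)), x = 0 ∨ x = 1 := by
    refine (ae_map_iff hmeas.aemeasurable ?_).2 (ae_of_all _ fun u => ?_)
    · exact (measurableSet_singleton 0).union (measurableSet_singleton 1)
    · exact_mod_cast ceil_sub_sub_ceil_sub_eq_zero_or_eq_one hab hba u
  have := Measure.isProbabilityMeasure_map (μ := uniform01) hmeas.aemeasurable
  rw [eq_bern_integral_of_ae_eq_zero_or_eq_one hval, integral_map hmeas.aemeasurable (by fun_prop)]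
  push_cast
  rw [integral_sub (integrable_ceil_sub_uniform01 b) (integrable_ceil_sub_uniform01 a),
    integral_ceil_sub_uniform01, integral_ceil_sub_uniform01]

section Coupling

variable {n : ℕ} (p : Fin n → ℝ)

/-- Coordinate `i` is the number of points of `u + ℤ` in `[s i, s i + p i)`, where
`s = Fin.partialSum p`. -/
def ceilCoupling (u : ℝ) (i : Fin n) : ℝ :=
  ((⌈Fin.partialSum p i.succ - u⌉ - ⌈Fin.partialSum p i.castSucc - u⌉ : ℤ) : ℝ)

lemma measurable_ceilCoupling : Measurable (ceilCoupling p) :=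
  measurable_pi_lambda _ fun i => by unfold ceilCoupling; fun_prop

variable {p}

lemma sum_ceilCoupling {k : ℤ} (hk : ∑ i, p i = k) (u : ℝ) : ∑ i, ceilCoupling p u i = k := by
  simp only [ceilCoupling, Int.cast_sub]
  rw [Fin.sum_succ_sub_castSucc fun j => (⌈Fin.partialSum p j - u⌉ : ℝ), Fin.partialSum_last, hk,
    Fin.partialSum_zero, zero_sub, sub_eq_neg_add (k : ℝ), Int.ceil_add_intCast]
  push_cast
  ring

lemma uniform01_map_ceilCoupling (hp : ∀ i, p i ∈ Icc (0 : ℝ) 1) (i : Fin n) :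
    uniform01.map (fun u => ceilCoupling p u i) = bern (p i) := by
  have hsucc : Fin.partialSum p i.succ - Fin.partialSum p i.castSucc = p i := by
    rw [Fin.partialSum_succ, add_sub_cancel_left]
  rw [← hsucc]
  exact uniform01_map_ceil_sub_sub_ceil_sub (by linarith [(hp i).1]) (by linarith [(hp i).2])

lemma dirac_mem_aggSet_bern (hp : ∀ i, p i ∈ Icc (0 : ℝ) 1) {k : ℤ} (hk : ∑ i, p i = k) :
    Measure.dirac (k : ℝ) ∈ aggSet n (fun i => bern (p i)) := by
  have hmeas := measurable_ceilCoupling p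
  refine ⟨uniform01.map (ceilCoupling p), Measure.isProbabilityMeasure_map hmeas.aemeasurable,
    fun i => ?_, ?_⟩
  · rw [Measure.map_map (measurable_pi_apply i) hmeas]
    exact uniform01_map_ceilCoupling hp i
  · rw [Measure.map_map (by fun_prop) hmeas, Function.comp_def]
    simp_rw [sum_ceilCoupling hk]
    rw [Measure.map_const, measure_univ, one_smul]

end Coupling

/-- Proposition 8.1: (B_{p₁},…,B_{pₙ}) is jointly mixable iff ∑ pᵢ ∈ ℤ. -/
theorem stmt17 (n : ℕ) (p : Fin n → ℝ) (hp : ∀ i, p i ∈ Set.Icc (0 : ℝ) 1) :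
    (∃ c : ℝ, Measure.dirac c ∈ aggSet n (fun i => bern (p i))) ↔
      ∃ k : ℤ, (∑ i, p i) = (k : ℝ) := by
  refine ⟨fun ⟨c, hc⟩ => ?_, fun ⟨k, hk⟩ => ⟨k, dirac_mem_aggSet_bern hp hk⟩⟩
  obtain ⟨k, rfl⟩ : c ∈ AddMonoidHom.mrange (Int.castAddHom ℝ) :=
    mem_of_dirac_mem_aggSet _ (fun i => (ae_eq_zero_or_eq_one_bern (p i)).mono fun x hx => by
      rcases hx with rfl | rfl
      exacts [⟨0, by simp⟩, ⟨1, by simp⟩]) hc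
  refine ⟨k, ?_⟩
  have hmean := integral_id_of_mem_aggSet (fun i => integrable_id_bern (p i)) hc
  simpa [integral_id_bern (hp _)] using hmean.symm

end
end
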